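/- arXiv:2107.02837 — 3 statements merged into one kernel-verified Lean document; each statement's English description precedes it below -/
import Mathlib

section
/- Any bounded below A(1)-module M of finite type splits as a direct sum M = M' ⊕ N of A(1)-submodules, where N is a (possibly infinite) direct sum of finite A(1)-modules and M' has no nonzero finite direct summand. -/
/-- A graded module over the subalgebra `A(1)` of the mod 2 Steenrod algebra:
an internally `ℤ`-graded `𝔽₂`-vector space equipped with operations `Sq¹` (degree `1`)
and `Sq²` (degree `2`) satisfying `Sq¹Sq¹ = 0` and `Sq²Sq² = Sq¹Sq²Sq¹`. -/
structure A1Module where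
  carrier : Type
  [acg : AddCommGroup carrier]
  [mod : Module (ZMod 2) carrier]
  gr : ℤ → Submodule (ZMod 2) carrier
  indep : iSupIndep gr
  total : ⨆ k : ℤ, gr k = ⊤
  sq1 : carrier →ₗ[ZMod 2] carrier
  sq2 : carrier →ₗ[ZMod 2] carrier
  sq1_gr : ∀ k : ℤ, ∀ x ∈ gr k, sq1 x ∈ gr (k + 1)
  sq2_gr : ∀ k : ℤ, ∀ x ∈ gr k, sq2 x ∈ gr (k + 2)
  sq1_sq1 : ∀ x, sq1 (sq1 x) = 0
  sq2_sq2 : ∀ x, sq2 (sq2 x) = sq1 (sq2 (sq1 x))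

attribute [instance] A1Module.acg A1Module.mod

namespace A1Module

variable (M : A1Module)

/-- The Milnor primitive `Q₁ = Sq¹Sq² + Sq²Sq¹`. -/
def Q1 : M.carrier →ₗ[ZMod 2] M.carrier := M.sq1 ∘ₗ M.sq2 + M.sq2 ∘ₗ M.sq1

/-- `M` is bounded below: `M_k = 0` for all `k` below some bound. -/
def BoundedBelow : Prop := ∃ n : ℤ, ∀ k : ℤ, k < n → M.gr k = ⊥

/-- `M` is of finite type: each graded piece is a finite-dimensional `𝔽₂`-vector space. -/
def FiniteType : Prop := ∀ k : ℤ, FiniteDimensional (ZMod 2) ↥(M.gr k)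

/-- `M` is finite: finite type and only finitely many nonzero graded pieces. -/
def FiniteModule : Prop := M.FiniteType ∧ {k : ℤ | M.gr k ≠ ⊥}.Finite

/-- `M` is `Q₀`-local: the `Q₁`-Margolis homology vanishes in every degree,
i.e. every homogeneous `Q₁`-cycle is a `Q₁`-boundary. -/
def Q0Local : Prop :=
  ∀ k : ℤ, LinearMap.ker M.Q1 ⊓ M.gr k ≤ Submodule.map M.Q1 (M.gr (k - 3))

/-- `p` is a (graded) `A(1)`-submodule of `M`. -/
def IsA1Sub (p : Submodule (ZMod 2) M.carrier) : Prop :=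
  (∀ x ∈ p, M.sq1 x ∈ p) ∧ (∀ x ∈ p, M.sq2 x ∈ p) ∧ p = ⨆ k : ℤ, p ⊓ M.gr k

/-- `p` is a direct summand of `M` in the category of graded `A(1)`-modules. -/
def IsSummand (p : Submodule (ZMod 2) M.carrier) : Prop :=
  M.IsA1Sub p ∧ ∃ q, M.IsA1Sub q ∧ p ⊓ q = ⊥ ∧ p ⊔ q = ⊤

/-- The action of the eight monomial basis elements
`1, Sq¹, Sq², Sq¹Sq², Sq²Sq¹, Sq¹Sq²Sq¹, Sq²Sq¹Sq², Sq¹Sq²Sq¹Sq²` of `A(1)`. -/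
def w8 : Fin 8 → (M.carrier →ₗ[ZMod 2] M.carrier) :=
  ![LinearMap.id, M.sq1, M.sq2, M.sq1 ∘ₗ M.sq2, M.sq2 ∘ₗ M.sq1,
    M.sq1 ∘ₗ M.sq2 ∘ₗ M.sq1, M.sq2 ∘ₗ M.sq1 ∘ₗ M.sq2,
    M.sq1 ∘ₗ M.sq2 ∘ₗ M.sq1 ∘ₗ M.sq2]

/-- The action of the four monomials `1, Sq², Sq¹Sq², Sq²Sq¹Sq²`, which give an `𝔽₂`-basis of
`A(1)//A(0)` applied to a generator. -/
def w4 : Fin 4 → (M.carrier →ₗ[ZMod 2] M.carrier) :=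
  ![LinearMap.id, M.sq2, M.sq1 ∘ₗ M.sq2, M.sq2 ∘ₗ M.sq1 ∘ₗ M.sq2]

/-- `p` is a free `A(1)`-submodule of `M`: it has homogeneous elements `g i` such that the
elements `Sqᴿ (g i)`, for `Sqᴿ` running over the monomial basis of `A(1)`, form a basis of `p`.
This says exactly that `p ≅ ⊕ᵢ Σ^{d i} A(1)` as graded `A(1)`-modules. -/
def IsFreeOn (p : Submodule (ZMod 2) M.carrier) : Prop :=
  ∃ (I : Type) (d : I → ℤ) (g : I → M.carrier),
    (∀ i, g i ∈ M.gr (d i)) ∧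
    LinearIndependent (ZMod 2) (fun q : I × Fin 8 => M.w8 q.2 (g q.1)) ∧
    Submodule.span (ZMod 2) (Set.range fun q : I × Fin 8 => M.w8 q.2 (g q.1)) = p

/-- `M` is reduced: it has no nonzero free direct summand. -/
def Reduced : Prop := ∀ p, M.IsSummand p → M.IsFreeOn p → p = ⊥

/-- `p` is a flock of seagulls `⊕ᵢ Σ^{α i} Υ_{n i}` inside `M`:
there are chains of elements `y i 0, y i 1, …` (of length `n i`, possibly infinite), with
`y i j` homogeneous of degree `α i + 4j`, linked by `Sq¹ y_{i,j+1} = Sq²Sq¹Sq² y_{i,j}` and with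
`Sq¹ y_{i,0} = 0`, such that the elements `Sqᴿ y_{i,j}`, for `Sqᴿ ∈ {1, Sq², Sq¹Sq², Sq²Sq¹Sq²}`,
form an `𝔽₂`-basis of `p`.  This says exactly that `p ≅ ⊕ᵢ Σ^{α i} Υ_{n i}`
as graded `A(1)`-modules. -/
def FlockBasisOn (p : Submodule (ZMod 2) M.carrier) (I : Type) (α : I → ℤ) (n : I → ℕ∞) :
    Prop :=
  ∃ y : I → ℕ → M.carrier,
    (∀ (i : I) (j : ℕ), (j : ℕ∞) < n i → y i j ∈ M.gr (α i + 4 * (j : ℤ))) ∧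
    (∀ i : I, M.sq1 (y i 0) = 0) ∧
    (∀ (i : I) (j : ℕ), ((j + 1 : ℕ) : ℕ∞) < n i →
      M.sq1 (y i (j + 1)) = M.sq2 (M.sq1 (M.sq2 (y i j)))) ∧
    LinearIndependent (ZMod 2)
      (fun q : {x : I × ℕ // (x.2 : ℕ∞) < n x.1} × Fin 4 => M.w4 q.2 (y q.1.1.1 q.1.1.2)) ∧
    Submodule.span (ZMod 2)
      (Set.range fun q : {x : I × ℕ // (x.2 : ℕ∞) < n x.1} × Fin 4 =>
        M.w4 q.2 (y q.1.1.1 q.1.1.2)) = p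

/-- `M` is (isomorphic to) a flock of seagulls `⊕ᵢ Σ^{α i} Υ_{n i}`. -/
def IsFlock : Prop :=
  ∃ (I : Type) (α : I → ℤ) (n : I → ℕ∞), (∀ i, 1 ≤ n i) ∧ M.FlockBasisOn ⊤ I α n

/-- `M^k`: the smallest `A(1)`-submodule of `M` containing all homogeneous elements of
degree at most `k`. -/
def below (k : ℤ) : Submodule (ZMod 2) M.carrier :=
  sInf {p | (∀ x ∈ p, M.sq1 x ∈ p) ∧ (∀ x ∈ p, M.sq2 x ∈ p) ∧ ∀ j ≤ k, M.gr j ≤ p}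

/-- The `A(1)`-submodule of `M` generated by a set. -/
def a1span (s : Set M.carrier) : Submodule (ZMod 2) M.carrier :=
  sInf {p | (∀ x ∈ p, M.sq1 x ∈ p) ∧ (∀ x ∈ p, M.sq2 x ∈ p) ∧ s ⊆ p}

/-- `p` is a finite submodule: each graded piece is finite-dimensional and all but finitely
many graded pieces vanish. -/
def FiniteOn (p : Submodule (ZMod 2) M.carrier) : Prop :=
  (∀ k : ℤ, FiniteDimensional (ZMod 2) ↥(p ⊓ M.gr k)) ∧ {k : ℤ | p ⊓ M.gr k ≠ ⊥}.Finite

end A1Module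

/-- Isomorphism of graded `A(1)`-modules. -/
def A1Iso (M N : A1Module) : Prop :=
  ∃ e : M.carrier ≃ₗ[ZMod 2] N.carrier,
    (∀ x, e (M.sq1 x) = N.sq1 (e x)) ∧
    (∀ x, e (M.sq2 x) = N.sq2 (e x)) ∧
    ∀ k : ℤ, ∀ x ∈ M.gr k, e x ∈ N.gr k

namespace A1Module

open scoped DirectSum

variable (M : A1Module)

theorem internal : DirectSum.IsInternal M.gr :=
  DirectSum.isInternal_submodule_of_iSupIndep_of_iSup_eq_top M.indep M.total

noncomputable def dsum : (⨁ k : ℤ, M.gr k) ≃ₗ[ZMod 2] M.carrier :=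
  LinearEquiv.ofBijective (DirectSum.coeLinearMap M.gr) M.internal

noncomputable def comp (k : ℤ) : M.carrier →ₗ[ZMod 2] M.carrier :=
  (M.gr k).subtype ∘ₗ (DirectSum.component (ZMod 2) ℤ (fun k => M.gr k) k) ∘ₗ
    (M.dsum.symm : M.carrier →ₗ[ZMod 2] (⨁ k : ℤ, M.gr k))

theorem comp_mem (k : ℤ) (x : M.carrier) : M.comp k x ∈ M.gr k := (M.dsum.symm x k).2

theorem comp_of_mem {k : ℤ} {x : M.carrier} (hx : x ∈ M.gr k) : M.comp k x = x := by
  have := DirectSum.IsInternal.ofBijective_coeLinearMap_of_mem M.internal hx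
  simp only [comp, LinearMap.comp_apply, Submodule.coe_subtype]
  erw [this]

theorem comp_of_mem_ne {j k : ℤ} {x : M.carrier} (hx : x ∈ M.gr j) (h : j ≠ k) :
    M.comp k x = 0 := by
  have h2 : (M.dsum.symm x) k = 0 :=
    DirectSum.IsInternal.ofBijective_coeLinearMap_of_ne M.internal h ⟨x, hx⟩
  show ((M.dsum.symm x) k : M.carrier) = 0
  rw [h2]; rfl

theorem comp_sum (x : M.carrier) : ∃ s : Finset ℤ, x = ∑ k ∈ s, M.comp k x := by
  classical
  refine ⟨(M.dsum.symm x).support, ?_⟩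
  conv_lhs => rw [← M.dsum.apply_symm_apply x]
  conv_lhs => rw [← DirectSum.sum_support_of (M.dsum.symm x)]
  rw [show (M.dsum (∑ i ∈ DFinsupp.support (M.dsum.symm x), (DirectSum.of (fun i => M.gr i) i) ((M.dsum.symm x) i))) = ∑ i ∈ DFinsupp.support (M.dsum.symm x), M.dsum ((DirectSum.of (fun i => M.gr i) i) ((M.dsum.symm x) i)) from map_sum M.dsum.toLinearMap _ _]
  refine Finset.sum_congr rfl fun k _ => ?_
  show M.dsum (DirectSum.of _ k ((M.dsum.symm x) k)) = ((M.dsum.symm x) k : M.carrier)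
  exact DirectSum.coeLinearMap_of M.gr k _

/-- A submodule is stable under homogeneous components. -/
def CompStable (p : Submodule (ZMod 2) M.carrier) : Prop :=
  ∀ k : ℤ, ∀ x ∈ p, M.comp k x ∈ p

theorem compStable_iff_graded (p : Submodule (ZMod 2) M.carrier) :
    M.CompStable p ↔ p = ⨆ k : ℤ, p ⊓ M.gr k := by
  constructor
  · intro h
    refine le_antisymm (fun x hx => ?_) (iSup_le fun k => inf_le_left)
    obtain ⟨s, hs⟩ := M.comp_sum x
    rw [hs]
    exact Submodule.sum_mem _ fun k _ =>
      Submodule.mem_iSup_of_mem k ⟨h k x hx, M.comp_mem k x⟩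
  · intro h k x hx
    rw [h] at hx
    refine Submodule.iSup_induction (motive := fun y => M.comp k y ∈ p) _ hx
      (fun j y hy => ?_) (by simp) (fun y z hy hz => by simpa only [map_add] using add_mem hy hz)
    · rcases eq_or_ne j k with rfl | hjk
      · rw [M.comp_of_mem hy.2]; rw [h]; exact Submodule.mem_iSup_of_mem j hy
      · rw [M.comp_of_mem_ne hy.2 hjk]; exact zero_mem p

end A1Module

namespace A1Module

open scoped DirectSum

variable (M : A1Module)

theorem compStable_sSup (T : Set (Submodule (ZMod 2) M.carrier))
    (h : ∀ p ∈ T, M.CompStable p) : M.CompStable (sSup T) := by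
  intro k x hx
  rw [sSup_eq_iSup'] at hx ⊢
  refine Submodule.iSup_induction (motive := fun y => M.comp k y ∈ ⨆ p : T, (p : Submodule (ZMod 2) M.carrier)) _ hx
    (fun p y hy => Submodule.mem_iSup_of_mem p (h p p.2 k y hy)) (by simp)
    (fun y z hy hz => by simpa only [map_add] using add_mem hy hz)

theorem compStable_iInf {ι : Sort*} (f : ι → Submodule (ZMod 2) M.carrier)
    (h : ∀ i, M.CompStable (f i)) : M.CompStable (⨅ i, f i) := by
  intro k x hx
  rw [Submodule.mem_iInf] at hx ⊢
  exact fun i => h i k x (hx i)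

theorem isA1Sub_sSup (T : Set (Submodule (ZMod 2) M.carrier))
    (h : ∀ p ∈ T, M.IsA1Sub p) : M.IsA1Sub (sSup T) := by
  have hsq : ∀ (g : M.carrier →ₗ[ZMod 2] M.carrier),
      (∀ p ∈ T, ∀ x ∈ p, g x ∈ p) → ∀ x ∈ sSup T, g x ∈ sSup T := by
    intro g hg x hx
    rw [sSup_eq_iSup'] at hx ⊢
    refine Submodule.iSup_induction (motive := fun y => g y ∈ ⨆ p : T, (p : Submodule (ZMod 2) M.carrier)) _ hx
      (fun p y hy => Submodule.mem_iSup_of_mem p (hg p p.2 y hy)) (by simp)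
      (fun y z hy hz => by simpa only [map_add] using add_mem hy hz)
  refine ⟨hsq M.sq1 (fun p hp => (h p hp).1), hsq M.sq2 (fun p hp => (h p hp).2.1), ?_⟩
  rw [← compStable_iff_graded]
  exact M.compStable_sSup T fun p hp => (M.compStable_iff_graded p).mpr (h p hp).2.2

theorem isA1Sub_top : M.IsA1Sub ⊤ := by
  refine ⟨fun _ _ => trivial, fun _ _ => trivial, ?_⟩
  have : ∀ k : ℤ, (⊤ : Submodule (ZMod 2) M.carrier) ⊓ M.gr k = M.gr k := fun k => top_inf_eq _
  rw [eq_comm]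
  calc ⨆ k : ℤ, ⊤ ⊓ M.gr k = ⨆ k : ℤ, M.gr k := by simp only [this]
    _ = ⊤ := M.total

theorem stabilize (hft : M.FiniteType) {ι : Type*} [Nonempty ι]
    (f : ι → Submodule (ZMod 2) M.carrier)
    (hch : ∀ i j, f i ≤ f j ∨ f j ≤ f i) (k : ℤ) :
    ∃ i₀, ∀ i, f i₀ ⊓ M.gr k ≤ f i ⊓ M.gr k := by
  haveI := hft k
  haveI : ∀ i, FiniteDimensional (ZMod 2) ↥(f i ⊓ M.gr k) := fun i =>
    Submodule.finiteDimensional_of_le inf_le_right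
  obtain ⟨i₀, hi₀⟩ : ∃ i₀, Module.finrank (ZMod 2) ↥(f i₀ ⊓ M.gr k) =
      sInf (Set.range fun i => Module.finrank (ZMod 2) ↥(f i ⊓ M.gr k)) :=
    Nat.sInf_mem (Set.range_nonempty _)
  refine ⟨i₀, fun i => ?_⟩
  rcases hch i i₀ with hle | hle
  · have h1 : f i ⊓ M.gr k ≤ f i₀ ⊓ M.gr k := inf_le_inf_right _ hle
    have h2 : Module.finrank (ZMod 2) ↥(f i₀ ⊓ M.gr k) ≤ Module.finrank (ZMod 2) ↥(f i ⊓ M.gr k) := by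
      rw [hi₀]
      exact Nat.sInf_le ⟨i, rfl⟩
    exact (Submodule.eq_of_le_of_finrank_le h1 h2).ge
  · exact inf_le_inf_right _ hle

end A1Module

namespace A1Module

variable (M : A1Module)

/-- The predicate for the Zorn argument: `z = (p, F)` with `p` a graded `A(1)`-submodule,
`F` an independent set of finite graded `A(1)`-submodules, and `p ⊕ sSup F = ⊤`. -/
def Good (z : (Submodule (ZMod 2) M.carrier)ᵒᵈ × Set (Submodule (ZMod 2) M.carrier)) : Prop :=
  M.IsA1Sub (OrderDual.ofDual z.1) ∧
  (∀ r ∈ z.2, M.IsA1Sub r ∧ M.FiniteOn r) ∧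
  sSupIndep z.2 ∧
  OrderDual.ofDual z.1 ⊓ sSup z.2 = ⊥ ∧
  OrderDual.ofDual z.1 ⊔ sSup z.2 = ⊤

theorem good_top : M.Good (OrderDual.toDual ⊤, ∅) := by
  refine ⟨M.isA1Sub_top, by simp, sSupIndep_empty, by simp, by simp⟩

theorem good_chain_ub (hft : M.FiniteType)
    (c : Set ((Submodule (ZMod 2) M.carrier)ᵒᵈ × Set (Submodule (ZMod 2) M.carrier)))
    (hcS : ∀ z ∈ c, M.Good z) (hchain : IsChain (· ≤ ·) c) (hc : c.Nonempty) :
    ∃ ub, M.Good ub ∧ ∀ z ∈ c, z ≤ ub := by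
  classical
  obtain ⟨z1, hz1⟩ := hc
  haveI : Nonempty c := ⟨⟨z1, hz1⟩⟩
  set pI : Submodule (ZMod 2) M.carrier :=
    ⨅ z : c, OrderDual.ofDual z.1.1 with hpIdef
  set U : Set (Submodule (ZMod 2) M.carrier) := ⋃ z ∈ c, z.2 with hUdef
  -- every element of `sSup` of a monotone union over the chain lies in some stage
  have key : ∀ g : ((Submodule (ZMod 2) M.carrier)ᵒᵈ × Set (Submodule (ZMod 2) M.carrier)) →
      Set (Submodule (ZMod 2) M.carrier), (∀ z w, z ≤ w → g z ⊆ g w) →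
      ∀ x ∈ sSup (⋃ z ∈ c, g z), ∃ z : c, x ∈ sSup (g z.1) := by
    intro g hg x hx
    have hdir : Directed (· ≤ ·) fun z : c => sSup (g z.1) := by
      intro z w
      rcases hchain.total z.2 w.2 with h | h
      · exact ⟨w, sSup_le_sSup (hg _ _ h), le_rfl⟩
      · exact ⟨z, le_rfl, sSup_le_sSup (hg _ _ h)⟩
    have h1 : sSup (⋃ z ∈ c, g z) ≤ ⨆ z : c, sSup (g z.1) := by
      apply sSup_le
      intro t ht
      simp only [Set.mem_iUnion] at ht
      obtain ⟨z, hz, htz⟩ := ht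
      exact le_trans (le_sSup htz) (le_iSup_of_le ⟨z, hz⟩ le_rfl)
    exact (Submodule.mem_iSup_of_directed _ hdir).mp (h1 hx)
  -- members of members of the chain
  have hmemU : ∀ r ∈ U, ∃ z : c, r ∈ z.1.2 := by
    intro r hr
    simp only [hUdef, Set.mem_iUnion] at hr
    obtain ⟨z, hz, hrz⟩ := hr
    exact ⟨⟨z, hz⟩, hrz⟩
  have hUsub : ∀ z : c, sSup z.1.2 ≤ sSup U := fun z =>
    sSup_le_sSup (Set.subset_biUnion_of_mem z.2)
  refine ⟨(OrderDual.toDual pI, U), ⟨?_, ?_, ?_, ?_, ?_⟩, fun z hz => ?_⟩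
  · -- IsA1Sub pI
    refine ⟨?_, ?_, ?_⟩
    · intro x hx
      have hx' : x ∈ ⨅ z : c, OrderDual.ofDual z.1.1 := hx
      show M.sq1 x ∈ ⨅ z : c, OrderDual.ofDual z.1.1
      rw [Submodule.mem_iInf] at hx' ⊢
      exact fun z => ((hcS z.1 z.2).1).1 x (hx' z)
    · intro x hx
      have hx' : x ∈ ⨅ z : c, OrderDual.ofDual z.1.1 := hx
      show M.sq2 x ∈ ⨅ z : c, OrderDual.ofDual z.1.1
      rw [Submodule.mem_iInf] at hx' ⊢
      exact fun z => ((hcS z.1 z.2).1).2.1 x (hx' z)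
    · exact (M.compStable_iff_graded pI).mp (M.compStable_iInf _ fun z =>
        (M.compStable_iff_graded _).mpr ((hcS z.1 z.2).1).2.2)
  · -- members
    intro r hr
    obtain ⟨z, hrz⟩ := hmemU r hr
    exact (hcS z.1 z.2).2.1 r hrz
  · -- independence
    intro a haU
    obtain ⟨z, haz⟩ := hmemU a haU
    rw [disjoint_iff, eq_bot_iff]
    intro x hx
    have hdiff : U \ {a} = ⋃ w ∈ c, (w.2 \ {a}) := by
      rw [hUdef]
      ext t
      simp only [Set.mem_diff, Set.mem_iUnion, Set.mem_singleton_iff]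
      tauto
    rw [hdiff] at hx
    obtain ⟨z', hxz'⟩ := key (fun w => w.2 \ {a})
      (fun w w' h => Set.diff_subset_diff_left h.2) x hx.2
    obtain ⟨w, haw, hle⟩ : ∃ w : c, a ∈ w.1.2 ∧
        sSup (z'.1.2 \ {a}) ≤ sSup (w.1.2 \ {a}) := by
      rcases hchain.total z.2 z'.2 with h | h
      · exact ⟨z', h.2 haz, le_rfl⟩
      · exact ⟨z, haz, sSup_le_sSup (Set.diff_subset_diff_left h.2)⟩
    exact ((hcS w.1 w.2).2.2.1 haw).le_bot ⟨hx.1, hle hxz'⟩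
  · -- inf = ⊥
    rw [eq_bot_iff]
    rintro x ⟨hx1, hx2⟩
    obtain ⟨z, hxz⟩ := key (fun w => w.2) (fun w w' h => h.2) x hx2
    have hx1' : x ∈ OrderDual.ofDual z.1.1 := by
      have hx1'' : x ∈ ⨅ w : c, OrderDual.ofDual w.1.1 := hx1
      rw [Submodule.mem_iInf] at hx1''; exact hx1'' z
    have := (hcS z.1 z.2).2.2.2.1
    rw [← this]
    exact ⟨hx1', hxz⟩
  · -- sup = ⊤
    rw [eq_top_iff, ← M.total]
    refine iSup_le fun k x hx => ?_
    obtain ⟨z₀, hz₀⟩ := M.stabilize hft (fun z : c => OrderDual.ofDual z.1.1)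
      (fun i j => by
        rcases hchain.total i.2 j.2 with h | h
        · exact Or.inr h.1
        · exact Or.inl h.1) k
    have htop0 := (hcS z₀.1 z₀.2).2.2.2.2
    have hxt : x ∈ OrderDual.ofDual z₀.1.1 ⊔ sSup z₀.1.2 := by
      rw [htop0]; trivial
    obtain ⟨a, ha, b, hb, hab⟩ := Submodule.mem_sup.mp hxt
    have hca : M.comp k a ∈ OrderDual.ofDual z₀.1.1 :=
      (M.compStable_iff_graded _).mpr ((hcS z₀.1 z₀.2).1).2.2 k a ha
    have hcb : M.comp k b ∈ sSup z₀.1.2 :=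
      M.compStable_sSup _ (fun r hr => (M.compStable_iff_graded r).mpr
        (((hcS z₀.1 z₀.2).2.1 r hr).1).2.2) k b hb
    have hxab : x = M.comp k a + M.comp k b := by
      rw [← map_add, hab, M.comp_of_mem hx]
    rw [hxab]
    have hpa : M.comp k a ∈ pI := by
      show M.comp k a ∈ ⨅ z : c, OrderDual.ofDual z.1.1
      rw [Submodule.mem_iInf]
      intro z
      exact (hz₀ z ⟨hca, M.comp_mem k a⟩).1
    exact Submodule.add_mem_sup hpa (hUsub z₀ hcb)
  · -- upper bound
    refine ⟨OrderDual.le_toDual.mpr (iInf_le _ (⟨z, hz⟩ : c)), ?_⟩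
    show z.2 ⊆ U
    exact Set.subset_biUnion_of_mem hz

end A1Module

/-- Lemma 3.17: any bounded below `A(1)`-module of finite type splits as a direct sum
`M = M' ⊕ N` of `A(1)`-submodules, where `N` is a (possibly infinite) direct sum of finite
`A(1)`-modules and `M'` has no nonzero finite direct summand. -/
theorem lem_part_two (M : A1Module) (hbdd : M.BoundedBelow) (hft : M.FiniteType) :
    ∃ p q : Submodule (ZMod 2) M.carrier,
      M.IsA1Sub p ∧ M.IsA1Sub q ∧ p ⊓ q = ⊥ ∧ p ⊔ q = ⊤ ∧
      (∃ (J : Type) (f : J → Submodule (ZMod 2) M.carrier),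
        (∀ j, M.IsA1Sub (f j)) ∧ (∀ j, M.FiniteOn (f j)) ∧
        iSupIndep f ∧ (⨆ j, f j) = q) ∧
      (∀ r s : Submodule (ZMod 2) M.carrier,
        M.IsA1Sub r → M.IsA1Sub s → r ⊓ s = ⊥ → r ⊔ s = p → M.FiniteOn r → r = ⊥) := by
  classical
  obtain ⟨m, hmS, hmax⟩ := zorn_le₀ (setOf M.Good) (fun c hcS hchain => by
    rcases c.eq_empty_or_nonempty with rfl | hc
    · exact ⟨(OrderDual.toDual ⊤, ∅), M.good_top, by simp⟩
    · obtain ⟨ub, hub, hub2⟩ := M.good_chain_ub hft c (fun z hz => hcS hz) hchain hc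
      exact ⟨ub, hub, hub2⟩)
  obtain ⟨hmA1, hmem, hind, hbot, htop⟩ := hmS
  set p : Submodule (ZMod 2) M.carrier := OrderDual.ofDual m.1 with hp
  set q : Submodule (ZMod 2) M.carrier := sSup m.2 with hq
  refine ⟨p, q, hmA1, M.isA1Sub_sSup m.2 (fun r hr => (hmem r hr).1), hbot, htop, ?_, ?_⟩
  · refine ⟨↥m.2, fun r => (r : Submodule (ZMod 2) M.carrier),
      fun r => (hmem r r.2).1, fun r => (hmem r r.2).2, (sSupIndep_iff m.2).mp hind,
      (sSup_eq_iSup' m.2).symm⟩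
  · intro r s hr hs hrs hsum hfin
    by_contra hrne
    -- r is not already in the family
    have hrp : r ≤ p := hsum ▸ le_sup_left
    have hrq : r ∉ m.2 := by
      intro hmem2
      refine hrne (le_bot_iff.mp ?_)
      rw [← hbot]
      exact le_inf hrp (le_sSup hmem2)
    -- the extended pair is Good
    have hnew : M.Good (OrderDual.toDual s, insert r m.2) := by
      refine ⟨hs, ?_, ?_, ?_, ?_⟩
      · intro t ht
        rcases Set.mem_insert_iff.mp ht with rfl | ht'
        · exact ⟨hr, hfin⟩
        · exact hmem t ht'
      · -- independence of insert r m.2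
        intro a ha
        rcases Set.mem_insert_iff.mp ha with rfl | ha'
        · -- a = r
          have : insert a m.2 \ {a} ⊆ m.2 := by
            intro t ht
            rcases Set.mem_insert_iff.mp ht.1 with rfl | ht'
            · exact absurd rfl ht.2
            · exact ht'
          rw [disjoint_iff, eq_bot_iff]
          intro x hx
          rw [← hbot]
          exact ⟨hrp hx.1, sSup_le_sSup this hx.2⟩
        · -- a ∈ m.2
          rw [disjoint_iff, eq_bot_iff]
          intro x hx
          have hsub : insert r m.2 \ {a} ⊆ insert r (m.2 \ {a}) := by
            intro t ht
            rcases Set.mem_insert_iff.mp ht.1 with rfl | ht'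
            · exact Set.mem_insert t _
            · exact Set.mem_insert_of_mem _ ⟨ht', ht.2⟩
          have hx2 : x ∈ sSup (insert r (m.2 \ {a})) := sSup_le_sSup hsub hx.2
          rw [sSup_insert] at hx2
          obtain ⟨v, hv, u, hu, huv⟩ := Submodule.mem_sup.mp hx2
          -- v ∈ r, u ∈ sSup (m.2 \ {a})
          have hvq : v ∈ q := by
            have hxq : x ∈ q := le_sSup ha' hx.1
            have huq : u ∈ q := (sSup_le_sSup (Set.diff_subset) : sSup (m.2 \ {a}) ≤ sSup m.2) hu
            have : v = x - u := by rw [← huv]; abel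
            rw [this]; exact sub_mem hxq huq
          have hv0 : v = 0 := by
            have : v ∈ p ⊓ q := ⟨hrp hv, hvq⟩
            rwa [hbot, Submodule.mem_bot] at this
          have hxu : x = u := by rw [← huv, hv0, zero_add]
          have : x ∈ a ⊓ sSup (m.2 \ {a}) := ⟨hx.1, hxu ▸ hu⟩
          exact (hind ha').le_bot this
      · -- s ⊓ sSup (insert r m.2) = ⊥
        rw [sSup_insert, eq_bot_iff]
        rintro x ⟨hxs, hxr⟩
        obtain ⟨v, hv, u, hu, huv⟩ := Submodule.mem_sup.mp hxr
        have hup : u ∈ p ⊓ q := by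
          constructor
          · have : u = x - v := by rw [← huv]; abel
            rw [this]
            have hxp : x ∈ p := by rw [← hsum]; exact Submodule.mem_sup_right hxs
            exact sub_mem hxp (hrp hv)
          · exact hu
        have hu0 : u = 0 := by rwa [hbot, Submodule.mem_bot] at hup
        have hxv : x = v := by rw [← huv, hu0, add_zero]
        have : x ∈ r ⊓ s := ⟨hxv ▸ hv, hxs⟩
        rwa [hrs, Submodule.mem_bot] at this
      · -- s ⊔ sSup (insert r m.2) = ⊤
        show s ⊔ sSup (insert r m.2) = ⊤
        rw [sSup_insert, ← sup_assoc, sup_comm s r, hsum, htop]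
    have hle : m ≤ (OrderDual.toDual s, insert r m.2) := by
      constructor
      · exact OrderDual.le_toDual.mpr (le_trans le_sup_right (le_of_eq hsum))
      · exact Set.subset_insert r m.2
    have := hmax hnew hle
    exact hrq (this.2 (Set.mem_insert r m.2))
end

section
/- For every finite n ≥ 1, the Margolis homology of the n-seagull is H_k(Υ_n;Q_0) = F_2 for k = 0 and k = 4n+1 and H_k(Υ_n;Q_0) = 0 otherwise, and H_k(Υ_n;Q_1) = 0 for all k. For the infinite seagull, H_k(Υ_∞;Q_0) = F_2 for k = 0 and 0 otherwise, and H_k(Υ_∞;Q_1) = 0 for all k. -/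
/-- `Q₀`-Margolis homology of `M` in degree `k`: `ker(Sq¹)_k / im(Sq¹)_k`. -/
noncomputable def q0H (M : A1Module) (k : ℤ) : Type :=
  ↥(LinearMap.ker M.sq1 ⊓ M.gr k) ⧸
    Submodule.comap (LinearMap.ker M.sq1 ⊓ M.gr k).subtype
      (Submodule.map M.sq1 (M.gr (k - 1)))

noncomputable instance (M : A1Module) (k : ℤ) : AddCommGroup (q0H M k) :=
  id (inferInstance :
    AddCommGroup (↥(LinearMap.ker M.sq1 ⊓ M.gr k) ⧸
      Submodule.comap (LinearMap.ker M.sq1 ⊓ M.gr k).subtype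
        (Submodule.map M.sq1 (M.gr (k - 1)))))

noncomputable instance (M : A1Module) (k : ℤ) : Module (ZMod 2) (q0H M k) :=
  id (inferInstance :
    Module (ZMod 2) (↥(LinearMap.ker M.sq1 ⊓ M.gr k) ⧸
      Submodule.comap (LinearMap.ker M.sq1 ⊓ M.gr k).subtype
        (Submodule.map M.sq1 (M.gr (k - 1)))))


namespace Seagull

open Submodule

lemma mem_gr_congr {M : A1Module} {k k' : ℤ} (h : k = k') {x : M.carrier}
    (hx : x ∈ M.gr k) : x ∈ M.gr k' := h ▸ hx

/-- The degree of the basis element `Sqᴿ y_j`, `R ∈ {1, Sq², Sq¹Sq², Sq²Sq¹Sq²}`. -/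
def dg (j : ℕ) (i : Fin 4) : ℤ := 4 * (j : ℤ) + ![0, 2, 3, 5] i

lemma dg_inj {j j' : ℕ} {i i' : Fin 4} (h : dg j i = dg j' i') : j = j' ∧ i = i' := by
  fin_cases i <;> fin_cases i' <;> simp only [dg] at h <;> norm_num at h ⊢ <;> omega

/-- The data of a single-seagull basis of `M`. -/
structure Data (M : A1Module) (n : ℕ∞) where
  z : ℕ → M.carrier
  hz : ∀ j : ℕ, (j : ℕ∞) < n → z j ∈ M.gr (4 * (j : ℤ))
  h0 : M.sq1 (z 0) = 0
  hs : ∀ j : ℕ, ((j + 1 : ℕ) : ℕ∞) < n → M.sq1 (z (j + 1)) = M.sq2 (M.sq1 (M.sq2 (z j)))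
  hli : LinearIndependent (ZMod 2)
    (fun q : {j : ℕ // (j : ℕ∞) < n} × Fin 4 => M.w4 q.2 (z q.1.1))
  hsp : Submodule.span (ZMod 2)
    (Set.range fun q : {j : ℕ // (j : ℕ∞) < n} × Fin 4 => M.w4 q.2 (z q.1.1)) = ⊤

namespace Data

variable {M : A1Module} {n : ℕ∞}

/-- The basis elements. -/
def b (S : Data M n) (j : ℕ) (i : Fin 4) : M.carrier := M.w4 i (S.z j)

lemma b_gr (S : Data M n) (j : ℕ) (i : Fin 4) (hj : (j : ℕ∞) < n) :
    S.b j i ∈ M.gr (dg j i) := by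
  have h0 := S.hz j hj
  have h1 := M.sq2_gr _ _ h0
  have h2 := M.sq1_gr _ _ h1
  have h3 := M.sq2_gr _ _ h2
  fin_cases i
  · exact mem_gr_congr (by simp [dg]) h0
  · exact mem_gr_congr (by simp [dg]) h1
  · exact mem_gr_congr (by simp [dg]; ring) h2
  · exact mem_gr_congr (by simp [dg]; ring) h3

lemma b_ne (S : Data M n) (j : ℕ) (i : Fin 4) (hj : (j : ℕ∞) < n) : S.b j i ≠ 0 :=
  S.hli.ne_zero (⟨⟨j, hj⟩, i⟩ : {j : ℕ // (j : ℕ∞) < n} × Fin 4)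

/-- The set of basis elements of degree exactly `k`. -/
def V (S : Data M n) (k : ℤ) : Set M.carrier :=
  {x | ∃ (j : ℕ) (i : Fin 4), ∃ _ : (j : ℕ∞) < n, dg j i = k ∧ x = S.b j i}

lemma gr_le_span (S : Data M n) (k : ℤ) : M.gr k ≤ span (ZMod 2) (S.V k) := by
  classical
  intro x hx
  have hx' : x ∈ span (ZMod 2) (Set.range fun q : {j : ℕ // (j : ℕ∞) < n} × Fin 4 =>
      M.w4 q.2 (S.z q.1.1)) := by rw [S.hsp]; exact Submodule.mem_top
  obtain ⟨c, hc⟩ := Finsupp.mem_span_range_iff_exists_finsupp.mp hx'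
  set f : {j : ℕ // (j : ℕ∞) < n} × Fin 4 → M.carrier := fun q => M.w4 q.2 (S.z q.1.1) with hf
  set P : {j : ℕ // (j : ℕ∞) < n} × Fin 4 → Prop := fun q => dg q.1.1 q.2 = k with hP
  have hsplit : ((Finsupp.filter P c).sum fun q a => a • f q)
      + ((Finsupp.filter (fun q => ¬ P q) c).sum fun q a => a • f q) = x := by
    have hadd := Finsupp.sum_add_index'
      (f := Finsupp.filter P c) (g := Finsupp.filter (fun q => ¬ P q) c)
      (h := fun q (a : ZMod 2) => a • f q)
      (fun q => zero_smul _ _) (fun q a a' => add_smul a a' (f q))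
    rw [Finsupp.filter_pos_add_filter_neg] at hadd
    rw [← hadd]
    exact hc
  have hmem1 : ((Finsupp.filter P c).sum fun q a => a • f q) ∈ span (ZMod 2) (S.V k) := by
    refine Submodule.finsuppSum_mem _ _ _ _ (fun q hq => ?_)
    have hPq : P q := by
      by_contra hPq
      rw [Finsupp.filter_apply, if_neg hPq] at hq
      exact hq rfl
    exact Submodule.smul_mem _ _ (Submodule.subset_span ⟨q.1.1, q.2, q.1.2, hPq, rfl⟩)
  have hgr1 : ((Finsupp.filter P c).sum fun q a => a • f q) ∈ M.gr k := by
    refine Submodule.finsuppSum_mem _ _ _ _ (fun q hq => ?_)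
    have hPq : P q := by
      by_contra hPq
      rw [Finsupp.filter_apply, if_neg hPq] at hq
      exact hq rfl
    exact Submodule.smul_mem _ _ (mem_gr_congr hPq (S.b_gr q.1.1 q.2 q.1.2))
  have hgr2 : ((Finsupp.filter (fun q => ¬ P q) c).sum fun q a => a • f q)
      ∈ ⨆ d, ⨆ _ : d ≠ k, M.gr d := by
    refine Submodule.finsuppSum_mem _ _ _ _ (fun q hq => ?_)
    have hPq : ¬ P q := by
      intro hPq
      rw [Finsupp.filter_apply, if_neg (fun hn => hn hPq)] at hq
      exact hq rfl
    exact Submodule.mem_iSup_of_mem (dg q.1.1 q.2) (Submodule.mem_iSup_of_mem hPq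
      (Submodule.smul_mem _ _ (S.b_gr q.1.1 q.2 q.1.2)))
  have heq : x - ((Finsupp.filter P c).sum fun q a => a • f q)
      = ((Finsupp.filter (fun q => ¬ P q) c).sum fun q a => a • f q) := by
    rw [← hsplit]; abel
  have hz0 : x - ((Finsupp.filter P c).sum fun q a => a • f q) = 0 := by
    have hd := M.indep k
    have hmem : x - ((Finsupp.filter P c).sum fun q a => a • f q)
        ∈ M.gr k ⊓ (⨆ d, ⨆ _ : d ≠ k, M.gr d) :=
      ⟨sub_mem hx hgr1, heq ▸ hgr2⟩
    simpa using hd.le_bot hmem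
  have hxx : x = ((Finsupp.filter P c).sum fun q a => a • f q) := by
    rwa [sub_eq_zero] at hz0
  rw [hxx]; exact hmem1

lemma mem_cases (S : Data M n) {k : ℤ} {x : M.carrier} (hx : x ∈ M.gr k) :
    x = 0 ∨ ∃ (j : ℕ) (i : Fin 4), ∃ _ : (j : ℕ∞) < n, dg j i = k ∧ x = S.b j i := by
  have h := S.gr_le_span k hx
  by_cases he : ∃ (j : ℕ) (i : Fin 4), ∃ _ : (j : ℕ∞) < n, dg j i = k
  · obtain ⟨j0, i0, hj0, hd0⟩ := he
    have hsub : S.V k ⊆ {S.b j0 i0} := by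
      rintro _ ⟨j, i, hj, hd, rfl⟩
      obtain ⟨rfl, rfl⟩ := dg_inj (hd.trans hd0.symm)
      rfl
    have h2 : x ∈ span (ZMod 2) {S.b j0 i0} := Submodule.span_mono hsub h
    obtain ⟨a, ha⟩ := Submodule.mem_span_singleton.mp h2
    have h01 : ∀ b : ZMod 2, b = 0 ∨ b = 1 := by decide
    rcases h01 a with rfl | rfl
    · left; rw [← ha, zero_smul]
    · right; exact ⟨j0, i0, hj0, hd0, by rw [← ha, one_smul]⟩
  · left
    have hVe : S.V k = ∅ := by
      ext w
      simp only [V, Set.mem_setOf_eq, Set.mem_empty_iff_false, iff_false]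
      rintro ⟨j, i, hj, hd, rfl⟩
      exact he ⟨j, i, hj, hd⟩
    rw [hVe, Submodule.span_empty, Submodule.mem_bot] at h
    exact h

lemma gr_bot (S : Data M n) {k : ℤ}
    (h : ∀ j : ℕ, ∀ i : Fin 4, (j : ℕ∞) < n → dg j i ≠ k) : M.gr k = ⊥ := by
  rw [eq_bot_iff]
  intro x hx
  rcases S.mem_cases hx with rfl | ⟨j, i, hj, hd, rfl⟩
  · exact Submodule.zero_mem ⊥
  · exact absurd hd (h j i hj)

lemma b3' (S : Data M n) (j : ℕ) : S.b j 3 = M.sq2 (M.sq1 (M.sq2 (S.z j))) := rfl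

lemma sq1_b1 (S : Data M n) (j : ℕ) : M.sq1 (S.b j 1) = S.b j 2 := rfl

lemma key3 (S : Data M n) (j : ℕ) (hj : (j : ℕ∞) < n) :
    M.sq1 (M.sq2 (M.sq1 (M.sq2 (S.z j)))) = 0 := by
  by_cases h : ((j + 1 : ℕ) : ℕ∞) < n
  · rw [← S.hs j h, M.sq1_sq1]
  · have hmem : M.sq1 (S.b j 3) ∈ M.gr (4 * (j : ℤ) + 6) := by
      have hh := M.sq1_gr _ _ (S.b_gr j 3 hj)
      exact mem_gr_congr (by simp [dg]; ring) hh
    have hbot : M.gr (4 * (j : ℤ) + 6) = ⊥ := by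
      refine S.gr_bot (fun j' i' hj' hd => ?_)
      have hj'n : (j' : ℕ∞) < ((j + 1 : ℕ) : ℕ∞) := lt_of_lt_of_le hj' (not_lt.mp h)
      have hj'j : j' < j + 1 := by exact_mod_cast hj'n
      fin_cases i' <;> simp only [dg] at hd <;> norm_num at hd <;> omega
    rw [hbot, Submodule.mem_bot] at hmem
    exact hmem

lemma sq1_b3 (S : Data M n) (j : ℕ) (hj : (j : ℕ∞) < n) : M.sq1 (S.b j 3) = 0 :=
  S.key3 j hj

lemma Q1_apply (x : M.carrier) : M.Q1 x = M.sq1 (M.sq2 x) + M.sq2 (M.sq1 x) := rfl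

lemma Q1_b0 (S : Data M n) (j : ℕ) (hj : (j : ℕ∞) < n) : M.Q1 (S.b j 0) = S.b j 2 := by
  cases j with
  | zero =>
      show M.sq1 (M.sq2 (S.z 0)) + M.sq2 (M.sq1 (S.z 0)) = M.sq1 (M.sq2 (S.z 0))
      rw [S.h0, map_zero, add_zero]
  | succ m =>
      show M.sq1 (M.sq2 (S.z (m + 1))) + M.sq2 (M.sq1 (S.z (m + 1)))
        = M.sq1 (M.sq2 (S.z (m + 1)))
      rw [S.hs m hj, M.sq2_sq2 (M.sq1 (M.sq2 (S.z m))), M.sq1_sq1 (M.sq2 (S.z m))]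
      simp

lemma Q1_b1 (S : Data M n) (j : ℕ) : M.Q1 (S.b j 1) = S.b j 3 := by
  show M.sq1 (M.sq2 (M.sq2 (S.z j))) + M.sq2 (M.sq1 (M.sq2 (S.z j)))
    = M.sq2 (M.sq1 (M.sq2 (S.z j)))
  rw [M.sq2_sq2 (S.z j), M.sq1_sq1 (M.sq2 (M.sq1 (S.z j))), zero_add]

lemma Q1_b2 (S : Data M n) (j : ℕ) (hj : (j : ℕ∞) < n) : M.Q1 (S.b j 2) = 0 := by
  show M.sq1 (M.sq2 (M.sq1 (M.sq2 (S.z j)))) + M.sq2 (M.sq1 (M.sq1 (M.sq2 (S.z j)))) = 0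
  rw [M.sq1_sq1 (M.sq2 (S.z j)), map_zero, add_zero]
  exact S.key3 j hj

lemma Q1_b3 (S : Data M n) (j : ℕ) (hj : (j : ℕ∞) < n) : M.Q1 (S.b j 3) = 0 := by
  show M.sq1 (M.sq2 (M.sq2 (M.sq1 (M.sq2 (S.z j)))))
    + M.sq2 (M.sq1 (M.sq2 (M.sq1 (M.sq2 (S.z j))))) = 0
  rw [M.sq2_sq2 (M.sq1 (M.sq2 (S.z j))), M.sq1_sq1 (M.sq2 (S.z j)), S.key3 j hj]
  simp

lemma incl_sq1 (S : Data M n) (k : ℤ) (hk0 : k ≠ 0)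
    (htop : ∀ j : ℕ, (j : ℕ∞) < n → dg j 3 = k → ((j + 1 : ℕ) : ℕ∞) < n) :
    LinearMap.ker M.sq1 ⊓ M.gr k ≤ Submodule.map M.sq1 (M.gr (k - 1)) := by
  rintro x ⟨hker', hgrk⟩
  have hker : M.sq1 x = 0 := hker'
  rcases S.mem_cases hgrk with rfl | ⟨j, i, hj, hd, rfl⟩
  · exact Submodule.zero_mem _
  · fin_cases i
    · -- i = 0
      cases j with
      | zero =>
          exfalso
          apply hk0
          have hd' : (0 : ℤ) + 0 = k := hd
          omega
      | succ m =>
          exfalso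
          have hm : ((m + 1 : ℕ) : ℕ∞) < n := hj
          have hm' : (m : ℕ∞) < n :=
            lt_trans (by exact_mod_cast Nat.lt_succ_self m) hm
          refine S.b_ne m 3 hm' ?_
          rw [S.b3', ← S.hs m hm]
          exact hker
    · -- i = 1
      exfalso
      have hz2 : S.b j 2 = 0 := hker
      exact S.b_ne j 2 hj hz2
    · -- i = 2
      have hd' : 4 * (j : ℤ) + 3 = k := hd
      exact ⟨S.b j 1, mem_gr_congr (show dg j 1 = k - 1 by
        show 4 * (j : ℤ) + 2 = k - 1; omega) (S.b_gr j 1 hj), S.sq1_b1 j⟩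
    · -- i = 3
      have hd' : 4 * (j : ℤ) + 5 = k := hd
      have hj1 : ((j + 1 : ℕ) : ℕ∞) < n := htop j hj hd
      exact ⟨S.b (j + 1) 0, mem_gr_congr (show dg (j + 1) 0 = k - 1 by
        show 4 * ((j + 1 : ℕ) : ℤ) + 0 = k - 1; omega) (S.b_gr (j + 1) 0 hj1),
        S.hs j hj1⟩

lemma incl_Q1 (S : Data M n) (k : ℤ) :
    LinearMap.ker M.Q1 ⊓ M.gr k ≤ Submodule.map M.Q1 (M.gr (k - 3)) := by
  rintro x ⟨hker', hgrk⟩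
  have hker : M.Q1 x = 0 := hker'
  rcases S.mem_cases hgrk with rfl | ⟨j, i, hj, hd, rfl⟩
  · exact Submodule.zero_mem _
  · fin_cases i
    · exfalso
      have hz2 : S.b j 2 = 0 := by rw [← S.Q1_b0 j hj]; exact hker
      exact S.b_ne j 2 hj hz2
    · exfalso
      have hz3 : S.b j 3 = 0 := by rw [← S.Q1_b1 j]; exact hker
      exact S.b_ne j 3 hj hz3
    · have hd' : 4 * (j : ℤ) + 3 = k := hd
      exact ⟨S.b j 0, mem_gr_congr (show dg j 0 = k - 3 by
        show 4 * (j : ℤ) + 0 = k - 3; omega) (S.b_gr j 0 hj), S.Q1_b0 j hj⟩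
    · have hd' : 4 * (j : ℤ) + 5 = k := hd
      exact ⟨S.b j 1, mem_gr_congr (show dg j 1 = k - 3 by
        show 4 * (j : ℤ) + 2 = k - 3; omega) (S.b_gr j 1 hj), S.Q1_b1 j⟩

end Data

lemma q0H_equiv_aux (M : A1Module) (k : ℤ) (v : M.carrier) (hv : v ≠ 0)
    (hker : M.sq1 v = 0) (hmem : v ∈ M.gr k)
    (hle : M.gr k ≤ span (ZMod 2) {v}) (hbot : M.gr (k - 1) = ⊥) :
    Nonempty (q0H M k ≃ₗ[ZMod 2] ZMod 2) := by
  have h1 : LinearMap.ker M.sq1 ⊓ M.gr k = span (ZMod 2) {v} := by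
    apply le_antisymm (le_trans inf_le_right hle)
    rw [Submodule.span_le, Set.singleton_subset_iff]
    exact ⟨LinearMap.mem_ker.mpr hker, hmem⟩
  have h2 : Submodule.comap (LinearMap.ker M.sq1 ⊓ M.gr k).subtype
      (Submodule.map M.sq1 (M.gr (k - 1))) = ⊥ := by
    rw [hbot, Submodule.map_bot, Submodule.comap_bot, Submodule.ker_subtype]
  exact ⟨(Submodule.quotEquivOfEqBot _ h2).trans ((LinearEquiv.ofEq _ _ h1).trans
    (LinearEquiv.toSpanNonzeroSingleton (ZMod 2) M.carrier v hv).symm)⟩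

namespace Data

variable {M : A1Module} {n : ℕ∞}

lemma q0H_zero (S : Data M n) (hn : 1 ≤ n) : Nonempty (q0H M 0 ≃ₗ[ZMod 2] ZMod 2) := by
  have h0n : ((0 : ℕ) : ℕ∞) < n := lt_of_lt_of_le (by norm_num) hn
  have hdg00 : dg 0 0 = 0 := by simp [dg]
  refine q0H_equiv_aux M 0 (S.b 0 0) (S.b_ne 0 0 h0n) S.h0
    (mem_gr_congr hdg00 (S.b_gr 0 0 h0n)) ?_ ?_
  · intro x hx
    rcases S.mem_cases hx with rfl | ⟨j, i, hj, hd, rfl⟩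
    · exact Submodule.zero_mem _
    · obtain ⟨rfl, rfl⟩ := dg_inj (hd.trans hdg00.symm)
      exact Submodule.mem_span_singleton_self _
  · refine S.gr_bot (fun j i hj hd => ?_)
    fin_cases i <;> simp only [dg] at hd <;> norm_num at hd <;> omega

lemma q0H_top (S : Data M n) (m : ℕ) (hm : 1 ≤ m) (hnm : n = (m : ℕ∞)) :
    Nonempty (q0H M (4 * (m : ℤ) + 1) ≃ₗ[ZMod 2] ZMod 2) := by
  have hj : ((m - 1 : ℕ) : ℕ∞) < n := by
    rw [hnm]; exact_mod_cast Nat.sub_lt hm one_pos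
  have hdg : dg (m - 1) 3 = 4 * (m : ℤ) + 1 := by
    show 4 * ((m - 1 : ℕ) : ℤ) + 5 = 4 * (m : ℤ) + 1
    omega
  refine q0H_equiv_aux M _ (S.b (m - 1) 3) (S.b_ne _ 3 hj) (S.sq1_b3 _ hj)
    (mem_gr_congr hdg (S.b_gr _ 3 hj)) ?_ ?_
  · intro x hx
    rcases S.mem_cases hx with rfl | ⟨j, i, hj', hd, rfl⟩
    · exact Submodule.zero_mem _
    · obtain ⟨rfl, rfl⟩ := dg_inj (hd.trans hdg.symm)
      exact Submodule.mem_span_singleton_self _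
  · refine S.gr_bot (fun j i hj' hd => ?_)
    have hjm : j < m := by rw [hnm] at hj'; exact_mod_cast hj'
    fin_cases i <;> simp only [dg] at hd <;> norm_num at hd <;> omega

end Data

lemma ofFlock {M : A1Module} {n : ℕ∞}
    (h : M.FlockBasisOn ⊤ PUnit (fun _ => 0) (fun _ => n)) : Nonempty (Data M n) := by
  obtain ⟨y, hgr, h0, hs, hli, hsp⟩ := h
  let e : {j : ℕ // (j : ℕ∞) < n} ≃ {x : PUnit × ℕ // (x.2 : ℕ∞) < n} :=
    { toFun := fun j => ⟨(PUnit.unit, j.1), j.2⟩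
      invFun := fun x => ⟨x.1.2, x.2⟩
      left_inv := fun j => rfl
      right_inv := fun x => rfl }
  refine ⟨⟨y PUnit.unit, fun j hj => ?_, h0 PUnit.unit,
    fun j hj => hs PUnit.unit j hj, ?_, ?_⟩⟩
  · simpa using hgr PUnit.unit j hj
  · exact hli.comp (Equiv.prodCongr e (Equiv.refl (Fin 4))) (Equiv.injective _)
  · have hr : (Set.range fun q : {j : ℕ // (j : ℕ∞) < n} × Fin 4 =>
        M.w4 q.2 (y PUnit.unit q.1.1))
        = Set.range (fun q : {x : PUnit × ℕ // (x.2 : ℕ∞) < n} × Fin 4 =>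
          M.w4 q.2 (y q.1.1.1 q.1.1.2)) := by
      rw [show (fun q : {j : ℕ // (j : ℕ∞) < n} × Fin 4 =>
          M.w4 q.2 (y PUnit.unit q.1.1)) =
        (fun q : {x : PUnit × ℕ // (x.2 : ℕ∞) < n} × Fin 4 =>
          M.w4 q.2 (y q.1.1.1 q.1.1.2)) ∘ (Equiv.prodCongr e (Equiv.refl (Fin 4)))
        from rfl]
      exact (Equiv.prodCongr e (Equiv.refl (Fin 4))).surjective.range_comp _
    rw [hr]
    exact hsp

end Seagull

/-- Margolis homology of the seagulls: for finite `n ≥ 1`, `H_k(Υ_n; Q₀) = 𝔽₂` for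
`k = 0` and `k = 4n+1` and vanishes otherwise, and `H_k(Υ_n; Q₁) = 0` for all `k`;
for the infinite seagull `Υ_∞`, `H_k(Υ_∞; Q₀) = 𝔽₂` for `k = 0` and vanishes otherwise,
and `H_k(Υ_∞; Q₁) = 0` for all `k`. -/
theorem seagull_margolis_homology :
    (∀ n : ℕ, 1 ≤ n → ∀ M : A1Module,
      M.FlockBasisOn ⊤ PUnit (fun _ => 0) (fun _ => (n : ℕ∞)) →
      Nonempty (q0H M 0 ≃ₗ[ZMod 2] ZMod 2) ∧
      Nonempty (q0H M (4 * (n : ℤ) + 1) ≃ₗ[ZMod 2] ZMod 2) ∧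
      (∀ k : ℤ, k ≠ 0 → k ≠ 4 * (n : ℤ) + 1 → Subsingleton (q0H M k)) ∧
      (∀ k : ℤ, LinearMap.ker M.Q1 ⊓ M.gr k ≤ Submodule.map M.Q1 (M.gr (k - 3)))) ∧
    (∀ M : A1Module,
      M.FlockBasisOn ⊤ PUnit (fun _ => 0) (fun _ => (⊤ : ℕ∞)) →
      Nonempty (q0H M 0 ≃ₗ[ZMod 2] ZMod 2) ∧
      (∀ k : ℤ, k ≠ 0 → Subsingleton (q0H M k)) ∧
      (∀ k : ℤ, LinearMap.ker M.Q1 ⊓ M.gr k ≤ Submodule.map M.Q1 (M.gr (k - 3)))) := by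
  constructor
  · intro n hn M hM
    obtain ⟨S⟩ := Seagull.ofFlock hM
    have hn' : (1 : ℕ∞) ≤ (n : ℕ∞) := by exact_mod_cast hn
    refine ⟨S.q0H_zero hn', S.q0H_top n hn rfl, fun k hk0 hktop => ?_, fun k => S.incl_Q1 k⟩
    have hincl : LinearMap.ker M.sq1 ⊓ M.gr k ≤ Submodule.map M.sq1 (M.gr (k - 1)) := by
      refine S.incl_sq1 k hk0 (fun j hj hd => ?_)
      by_contra hc
      have h1 : j < n := by exact_mod_cast hj
      have h3 : n ≤ j + 1 := by exact_mod_cast not_lt.mp hc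
      have hd' : 4 * (j : ℤ) + 5 = k := hd
      exact hktop (by omega)
    exact Submodule.Quotient.subsingleton_iff.mpr
      (Submodule.comap_subtype_eq_top.mpr hincl)
  · intro M hM
    obtain ⟨S⟩ := Seagull.ofFlock hM
    refine ⟨S.q0H_zero le_top, fun k hk0 => ?_, fun k => S.incl_Q1 k⟩
    have hincl : LinearMap.ker M.sq1 ⊓ M.gr k ≤ Submodule.map M.sq1 (M.gr (k - 1)) := by
      refine S.incl_sq1 k hk0 (fun j hj hd => ?_)
      exact ENat.coe_lt_top _
    exact Submodule.Quotient.subsingleton_iff.mpr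
      (Submodule.comap_subtype_eq_top.mpr hincl)
end

section
/- There is no F_2-linear map S: Υ_1 → Υ_1 raising internal degree by 4 (i.e., S((Υ_1)_k) ⊆ (Υ_1)_{k+4} for all k) such that Sq^1 ∘ S + S ∘ Sq^1 = Sq^2 ∘ Sq^1 ∘ Sq^2 as maps Υ_1 → Υ_1. (Hence the A(1)-module Υ_1 admits no action of Sq^4 compatible with the Adem relation Sq^1 Sq^4 + Sq^4 Sq^1 = Sq^2 Sq^1 Sq^2, so Υ_1 does not lift to a module over the full Steenrod algebra.) -/
/-- The `1`-seagull `Υ₁ = A(1)//A(0)`, as the `𝔽₂`-vector space with basis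
`y₀, Sq² y₀, Sq¹Sq² y₀, Sq²Sq¹Sq² y₀`, encoded as `Fin 4 → ZMod 2`. -/
abbrev Ups1 : Type := Fin 4 → ZMod 2

/-- The internal degrees `0, 2, 3, 5` of the basis elements of `Υ₁`. -/
def ups1Deg : Fin 4 → ℤ := ![0, 2, 3, 5]

/-- The action of `Sq¹` on `Υ₁`: `Sq¹(Sq² y₀) = Sq¹Sq² y₀`, and `Sq¹` kills the other basis
elements. -/
noncomputable def ups1Sq1 : Ups1 →ₗ[ZMod 2] Ups1 :=
  LinearMap.pi ![0, 0, LinearMap.proj 1, 0]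

/-- The action of `Sq²` on `Υ₁`: `Sq² y₀` and `Sq²(Sq¹Sq² y₀) = Sq²Sq¹Sq² y₀`, and `Sq²`
kills the other basis elements. -/
noncomputable def ups1Sq2 : Ups1 →ₗ[ZMod 2] Ups1 :=
  LinearMap.pi ![0, LinearMap.proj 0, 0, LinearMap.proj 2]

/-- There is no `𝔽₂`-linear map `S : Υ₁ → Υ₁` raising internal degree by `4` and satisfying
`Sq¹ ∘ S + S ∘ Sq¹ = Sq² ∘ Sq¹ ∘ Sq²`; hence `Υ₁` admits no action of `Sq⁴` compatible with
the Adem relation `Sq¹Sq⁴ + Sq⁴Sq¹ = Sq²Sq¹Sq²`, so `Υ₁` does not lift to a module over the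
full Steenrod algebra. -/
theorem ups1_no_sq4 :
    ¬ ∃ S : Ups1 →ₗ[ZMod 2] Ups1,
      (∀ (k : ℤ) (f : Ups1), (∀ i, f i ≠ 0 → ups1Deg i = k) →
        ∀ i, S f i ≠ 0 → ups1Deg i = k + 4) ∧
      (∀ f : Ups1, ups1Sq1 (S f) + S (ups1Sq1 f) = ups1Sq2 (ups1Sq1 (ups1Sq2 f))) := by
  rintro ⟨S, hdeg, hadem⟩
  set f : Ups1 := ![1, 0, 0, 0] with hf
  have hSf : S f = 0 := by
    funext i
    by_contra h
    have h4 : ups1Deg i = 0 + 4 := by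
      refine hdeg 0 f ?_ i h
      intro j hj
      fin_cases j <;> first | rfl | exact absurd rfl hj
    fin_cases i <;> simp_all [ups1Deg]
  have hSq1f : ups1Sq1 f = 0 := by
    funext i
    fin_cases i <;> simp [ups1Sq1, hf, LinearMap.pi_apply]
  have := hadem f
  rw [hSf, hSq1f, map_zero, map_zero, add_zero] at this
  have h3 := congrFun this 3
  simp [ups1Sq1, ups1Sq2, hf, LinearMap.pi_apply] at h3
end
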